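/- Consider the modified GSEMO on LOTZ and assume that, in every iteration after the Pareto front is reached in which the population does not cover the whole Pareto front, a good individual is selected as parent with probability at least p_good. Then the expected number of iterations until the population covers the whole Pareto front is at most O(n²/p_good). -/

import Mathlib

noncomputable section
open scoped ENNReal
attribute [local instance] Classical.propDecidable

namespace EMO


/-- A bit string of length `n`. -/
abbrev BitString (n : ℕ) := Fin n → Bool

/-- Number of one-bits. -/
def onesCount {n : ℕ} (x : BitString n) : ℕ :=
  (Finset.univ.filter fun i => x i = true).card

def allOnes (n : ℕ) : BitString n := fun _ => true
def allZeros (n : ℕ) : BitString n := fun _ => false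

/-- The bi-objective function OneMinMax. -/
def OneMinMax {n : ℕ} (x : BitString n) : ℤ × ℤ :=
  ((onesCount x : ℤ), (n : ℤ) - (onesCount x : ℤ))

/-- Number of leading ones. -/
def leadingOnes {n : ℕ} (x : BitString n) : ℕ :=
  (Finset.univ.filter fun i : Fin n => ∀ j : Fin n, j ≤ i → x j = true).card

/-- Number of trailing zeros. -/
def trailingZeros {n : ℕ} (x : BitString n) : ℕ :=
  (Finset.univ.filter fun i : Fin n => ∀ j : Fin n, i ≤ j → x j = false).card

/-- The bi-objective function LOTZ. -/
def LOTZ {n : ℕ} (x : BitString n) : ℤ × ℤ :=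
  ((leadingOnes x : ℤ), (trailingZeros x : ℤ))

/-- `y` dominates `x` (maximisation). -/
def dominates {n : ℕ} (f : BitString n → ℤ × ℤ) (y x : BitString n) : Prop :=
  (f x).1 ≤ (f y).1 ∧ (f x).2 ≤ (f y).2 ∧ f x ≠ f y

/-- `y` weakly dominates `x` (maximisation). -/
def weaklyDominates {n : ℕ} (f : BitString n → ℤ × ℤ) (y x : BitString n) : Prop :=
  (f x).1 ≤ (f y).1 ∧ (f x).2 ≤ (f y).2

/-- Pareto optimality. -/
def paretoOptimal {n : ℕ} (f : BitString n → ℤ × ℤ) (x : BitString n) : Prop :=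
  ¬ ∃ y : BitString n, dominates f y x

/-- A population of mutually non-dominated points. -/
def mutuallyNonDominated {n : ℕ} (f : BitString n → ℤ × ℤ)
    (P : Finset (BitString n)) : Prop :=
  ∀ x ∈ P, ∀ y ∈ P, ¬ dominates f y x

/-- Flip bit `i` of `x`. -/
def flipBit {n : ℕ} (x : BitString n) (i : Fin n) : BitString n :=
  Function.update x i (!x i)

/-- `y` is a Hamming neighbour of `x`. -/
def hammingNeighbour {n : ℕ} (x y : BitString n) : Prop :=
  ∃ i : Fin n, y = flipBit x i

/-- `x` is good relative to population `P`: it is Pareto optimal and has a Pareto-optimal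
Hamming neighbour whose objective vector is not attained by any member of `P`. -/
def isGood {n : ℕ} (f : BitString n → ℤ × ℤ) (P : Finset (BitString n))
    (x : BitString n) : Prop :=
  paretoOptimal f x ∧
    ∃ y : BitString n, hammingNeighbour x y ∧ paretoOptimal f y ∧ ∀ z ∈ P, f z ≠ f y

/-- `x` is bad relative to population `P`. -/
def isBad {n : ℕ} (f : BitString n → ℤ × ℤ) (P : Finset (BitString n))
    (x : BitString n) : Prop :=
  paretoOptimal f x ∧
    ¬ ∃ y : BitString n, hammingNeighbour x y ∧ paretoOptimal f y ∧ ∀ z ∈ P, f z ≠ f y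

/-- `P` covers the whole Pareto front of `f`. -/
def coversFront {n : ℕ} (f : BitString n → ℤ × ℤ) (P : Finset (BitString n)) : Prop :=
  ∀ x : BitString n, paretoOptimal f x → ∃ z ∈ P, f z = f x

/-- The hypervolume contribution of `x` to `P` (for a population of mutually
non-dominated points, with reference point `r`). -/
def HVC {n : ℕ} (f : BitString n → ℤ × ℤ) (r : ℤ × ℤ) (x : BitString n)
    (P : Finset (BitString n)) : ℤ :=
  ((f x).1 - (WithBot.unbotD r.1 ((P.filter fun z => (f z).1 < (f x).1).image fun z => (f z).1).max)) *
  ((f x).2 - (WithBot.unbotD r.2 ((P.filter fun z => (f z).2 < (f x).2).image fun z => (f z).2).max))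

/-- Crowding distance of `x` in `P` with respect to a single objective `g`: infinite for the
boundary points, and otherwise the normalised difference between successor and predecessor. -/
def CDCobj {n : ℕ} (g : BitString n → ℤ) (x : BitString n)
    (P : Finset (BitString n)) : ℝ≥0∞ :=
  if (∀ z ∈ P, g x ≤ g z) ∨ (∀ z ∈ P, g z ≤ g x) then ⊤
  else
    (((WithTop.untopD 0 ((P.filter fun z => g x < g z).image g).min -
        (WithBot.unbotD 0 ((P.filter fun z => g z < g x).image g).max)).toNat : ℝ≥0∞)) /
      (((WithBot.unbotD 0 (P.image g).max - (WithTop.untopD 0 (P.image g).min)).toNat : ℝ≥0∞))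

/-- The crowding distance contribution of `x` to `P`. -/
def CDC {n : ℕ} (f : BitString n → ℤ × ℤ) (x : BitString n)
    (P : Finset (BitString n)) : ℝ≥0∞ :=
  CDCobj (fun z => (f z).1) x P + CDCobj (fun z => (f z).2) x P

/-- A diversity measure `c` is diversity-favouring on `S`. -/
def diversityFavouring {n : ℕ} {α : Type*} [Preorder α] (f : BitString n → ℤ × ℤ)
    (c : BitString n → Finset (BitString n) → α) (S : Set (BitString n)) : Prop :=
  ∀ P : Finset (BitString n), mutuallyNonDominated f P →
    ∀ x ∈ P, ∀ y ∈ P, x ∈ S → y ∈ S → isBad f P x → isGood f P y → c x P < c y P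

/-- The default bit string (used only to make selection kernels total). -/
def defaultBS (n : ℕ) : BitString n := fun _ => false

/-- Local mutation: flip a single uniformly random bit. -/
def localMutation {n : ℕ} (hn : 0 < n) (x : BitString n) : PMF (BitString n) :=
  haveI : Nonempty (Fin n) := ⟨⟨0, hn⟩⟩
  (PMF.uniformOfFintype (Fin n)).map (flipBit x)

/-- A Bernoulli coin with success probability `1/n` (for `n ≥ 1`). -/
def bitFlipCoin (n : ℕ) : PMF Bool :=
  PMF.bernoulli (min ((n : ℝ≥0∞))⁻¹ 1).toNNReal
    ((ENNReal.toNNReal_mono ENNReal.one_ne_top (min_le_right _ _)).trans_eq ENNReal.toNNReal_one)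

/-- Global (standard bit) mutation: flip each bit independently with probability `1/n`. -/
def globalMutationAux {n : ℕ} : List (Fin n) → BitString n → PMF (BitString n)
  | [], x => PMF.pure x
  | i :: is, x => (bitFlipCoin n).bind fun b =>
      globalMutationAux is (if b then flipBit x i else x)

def globalMutation {n : ℕ} (x : BitString n) : PMF (BitString n) :=
  globalMutationAux (List.finRange n) x

/-- Survival selection: if `s'` is not dominated by any member of `P`, add `s'` to `P` and
remove all members weakly dominated by `s'`. -/
def updatePop {n : ℕ} (f : BitString n → ℤ × ℤ) (P : Finset (BitString n))
    (s' : BitString n) : Finset (BitString n) :=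
  if ∃ z ∈ P, dominates f z s' then P
  else insert s' (P.filter fun z => ¬ weaklyDominates f s' z)

/-- One iteration of (G)SEMO with parent-selection kernel `select` and mutation `mutate`. -/
def step {n : ℕ} (f : BitString n → ℤ × ℤ)
    (select : Finset (BitString n) → PMF (BitString n))
    (mutate : BitString n → PMF (BitString n))
    (P : Finset (BitString n)) : PMF (Finset (BitString n)) :=
  (select P).bind fun s => (mutate s).map fun s' => updatePop f P s'

/-- The L-dominant attribute `L(x) = LO(x) + TZ(x)`. -/
def Ldom {n : ℕ} (x : BitString n) : ℕ := leadingOnes x + trailingZeros x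

/-- The subpopulation of points with maximum L-dominant attribute. -/
def maxLSub {n : ℕ} (P : Finset (BitString n)) : Finset (BitString n) :=
  P.filter fun x => ∀ z ∈ P, Ldom z ≤ Ldom x

/-- One iteration of the modified GSEMO: parent selection (and the diversity contribution)
is restricted to the subpopulation of points with maximum L-dominant attribute. -/
def stepMod {n : ℕ} (f : BitString n → ℤ × ℤ)
    (select : Finset (BitString n) → PMF (BitString n))
    (mutate : BitString n → PMF (BitString n))
    (P : Finset (BitString n)) : PMF (Finset (BitString n)) :=
  (select (maxLSub P)).bind fun s => (mutate s).map fun s' => updatePop f P s'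

/-- Initial population: a single uniformly random bit string. -/
def initDist (n : ℕ) : PMF (Finset (BitString n)) :=
  (PMF.uniformOfFintype (BitString n)).map fun x => {x}

/-- Distribution of the population after `t` iterations. -/
def stateDist {S : Type*} (init : PMF S) (st : S → PMF S) : ℕ → PMF S
  | 0 => init
  | t + 1 => (stateDist init st t).bind st

/-- Expected number of iterations until an (absorbing) goal predicate is reached,
expressed as `∑ₜ Pr[goal not yet reached at time t]`. -/
def expectedRuntime {S : Type*} (init : PMF S) (st : S → PMF S) (goal : S → Prop) : ℝ≥0∞ :=
  ∑' t : ℕ, (stateDist init st t).toOuterMeasure {s | ¬ goal s}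

/-- Uniform parent selection. -/
def uniformSelect {n : ℕ} (P : Finset (BitString n)) : PMF (BitString n) :=
  if h : P.Nonempty then PMF.uniformOfFinset P h else PMF.pure (defaultBS n)

/-- Highest Diversity Contribution (HDC) parent selection: select an individual with
maximum diversity contribution, ties broken uniformly at random. -/
def HDCSelect {n : ℕ} {α : Type*} [LinearOrder α]
    (c : BitString n → Finset (BitString n) → α)
    (P : Finset (BitString n)) : PMF (BitString n) :=
  if h : P.Nonempty then
    PMF.uniformOfFinset (P.filter fun x => ∀ y ∈ P, c y P ≤ c x P)
      (by
        obtain ⟨b, hb, hmax⟩ := P.exists_max_image (fun x => c x P) h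
        exact ⟨b, Finset.mem_filter.mpr ⟨hb, hmax⟩⟩)
  else PMF.pure (defaultBS n)

/-- Non-Minimum Uniform at Random (NMUAR) parent selection: select uniformly at random
among all individuals whose diversity contribution is not minimal (from the whole
population if all contributions are equal). -/
def NMUARSelect {n : ℕ} {α : Type*} [LinearOrder α]
    (c : BitString n → Finset (BitString n) → α)
    (P : Finset (BitString n)) : PMF (BitString n) :=
  if h : P.Nonempty then
    if hQ : (P.filter fun x => ∃ y ∈ P, c y P < c x P).Nonempty then
      PMF.uniformOfFinset _ hQ
    else PMF.uniformOfFinset P h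
  else PMF.pure (defaultBS n)

/-- Tournament selection with tournament size `μ = |P|`: draw `μ` individuals uniformly at
random with replacement from `P` and select one with the highest diversity contribution
among the drawn multiset (ties broken uniformly at random). -/
def tournamentSelect {n : ℕ} {α : Type*} [LinearOrder α]
    (c : BitString n → Finset (BitString n) → α)
    (P : Finset (BitString n)) : PMF (BitString n) :=
  if h : P.Nonempty then
    haveI : Nonempty {x // x ∈ P} := h.to_subtype
    (PMF.uniformOfFintype (Fin P.card → {x // x ∈ P})).bind fun g =>
      PMF.uniformOfFinset
        ((Finset.univ.image fun i => ((g i : {x // x ∈ P}) : BitString n)).filter fun x =>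
          ∀ y ∈ Finset.univ.image fun i => ((g i : {x // x ∈ P}) : BitString n), c y P ≤ c x P)
        (by
          have hne : (Finset.univ.image fun i => ((g i : {x // x ∈ P}) : BitString n)).Nonempty := by
            refine ⟨(g ⟨0, Finset.card_pos.mpr h⟩ : {x // x ∈ P}), ?_⟩
            exact Finset.mem_image.mpr ⟨⟨0, Finset.card_pos.mpr h⟩, Finset.mem_univ _, rfl⟩
          obtain ⟨b, hb, hmax⟩ :=
            Finset.exists_max_image _ (fun x => c x P) hne
          exact ⟨b, Finset.mem_filter.mpr ⟨hb, hmax⟩⟩)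
  else PMF.pure (defaultBS n)

/-- Exponential ranking scheme: probability of selecting the `i`-th ranked individual
(1-indexed) in a population of size `μ`. -/
def rExp (i μ : ℕ) : ℝ≥0∞ :=
  (2 : ℝ≥0∞)⁻¹ ^ i / ∑ j ∈ Finset.Icc 1 μ, (2 : ℝ≥0∞)⁻¹ ^ j

/-- Power-law ranking scheme. -/
def rPow (i μ : ℕ) : ℝ≥0∞ :=
  ((i : ℝ≥0∞) ^ 2)⁻¹ / ∑ j ∈ Finset.Icc 1 μ, ((j : ℝ≥0∞) ^ 2)⁻¹

/-- Harmonic ranking scheme. -/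
def rHarm (i μ : ℕ) : ℝ≥0∞ :=
  (i : ℝ≥0∞)⁻¹ / ∑ j ∈ Finset.Icc 1 μ, (j : ℝ≥0∞)⁻¹


/-- `select` implements a rank-based parent-selection scheme with rank probabilities
`r i μ` (1-indexed rank `i`, population size `μ`) with respect to the diversity
contribution `c`, for some non-increasing ordering of the population by `c`. -/
def implementsRankScheme {n : ℕ} {α : Type*} [Preorder α]
    (c : BitString n → Finset (BitString n) → α) (r : ℕ → ℕ → ℝ≥0∞)
    (select : Finset (BitString n) → PMF (BitString n)) : Prop :=
  ∀ P : Finset (BitString n), P.Nonempty →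
    ∃ l : List (BitString n), l.Nodup ∧ l.toFinset = P ∧
      l.Chain' (fun a b => c b P ≤ c a P) ∧
      (∀ i : Fin l.length, select P (l.get i) = r (i.val + 1) P.card) ∧
      (∀ x : BitString n, x ∉ P → select P x = 0)

/-- The Pareto-optimal point `1^i 0^(n-i)` of LOTZ. -/
def opt (n i : ℕ) : BitString n := fun t => decide ((t : ℕ) < i)

/-- The whole Pareto set of LOTZ as a population. -/
def frontSet (n : ℕ) : Finset (BitString n) := (Finset.range (n + 1)).image (opt n)

/-- `P` has a gap at position `i`. -/
def hasGapAt {n : ℕ} (P : Finset (BitString n)) (i : ℕ) : Prop :=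
  opt n i ∉ P ∧ (∃ j, j < i ∧ opt n j ∈ P) ∧ (∃ k, i < k ∧ k ≤ n ∧ opt n k ∈ P)

/-- `P` has a gap at some position `i` with `n/4 ≤ i ≤ 3n/4`. -/
def gapInRange (n : ℕ) (P : Finset (BitString n)) : Prop :=
  ∃ i : ℕ, n ≤ 4 * i ∧ 4 * i ≤ 3 * n ∧ hasGapAt P i

/-- `P` contains both `0^n` and `1^n`. -/
def bothExtremes (n : ℕ) (P : Finset (BitString n)) : Prop :=
  allZeros n ∈ P ∧ allOnes n ∈ P

/-- The chain stopped (frozen) as soon as `cond` holds. -/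
def stopWhen {S : Type*} (cond : S → Prop) (st : S → PMF S) (s : S) : PMF S :=
  if cond s then PMF.pure s else st s


/-!
The potential `Φ(P) = max_{z ∈ P} L(z) + #{LO(z) : z ∈ P Pareto optimal}` never decreases,
is at most `2n + 1`, and reaches `2n + 1` only when the Pareto front is covered. It increases
with probability at least `p/(3n)` in every iteration: before the front is reached, every
parent of maximal `L` has a one-bit flip raising `max L`; afterwards a good parent has a
one-bit flip creating a new Pareto-optimal objective vector; and standard bit mutation
performs a given one-bit flip with probability `(1/n)(1 - 1/n)^(n-1) ≥ 1/(3n)`. A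
fitness-level argument over the `2n + 1` values of `Φ` gives the bound `(2n + 1) · 3n / p`.
-/

theorem _root_.Fin.lt_card_filter_iff_of_antitone {n : ℕ} {p : Fin n → Prop} (hp : Antitone p)
    (i : Fin n) : i.val < (Finset.univ.filter p).card ↔ p i := by
  constructor
  · intro h
    by_contra hi
    have hsub : Finset.univ.filter p ⊆ Finset.Iio i := fun k hk =>
      Finset.mem_Iio.2 (lt_of_not_ge fun hik => hi (hp hik (Finset.mem_filter.1 hk).2))
    have := Finset.card_le_card hsub
    rw [Fin.card_Iio] at this
    omega
  · intro hi
    have hsub : Finset.Iic i ⊆ Finset.univ.filter p := fun k hk =>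
      Finset.mem_filter.2 ⟨Finset.mem_univ _, hp (Finset.mem_Iic.1 hk) hi⟩
    have := Finset.card_le_card hsub
    rw [Fin.card_Iic] at this
    omega

theorem _root_.Fin.sub_card_filter_le_iff_of_monotone {n : ℕ} {p : Fin n → Prop}
    (hp : Monotone p) (i : Fin n) : n - (Finset.univ.filter p).card ≤ i.val ↔ p i := by
  constructor
  · intro h
    by_contra hi
    have hsub : Finset.univ.filter p ⊆ Finset.Ioi i := fun k hk =>
      Finset.mem_Ioi.2 (lt_of_not_ge fun hki => hi (hp hki (Finset.mem_filter.1 hk).2))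
    have := Finset.card_le_card hsub
    rw [Fin.card_Ioi] at this
    omega
  · intro hi
    have hsub : Finset.Ici i ⊆ Finset.univ.filter p := fun k hk =>
      Finset.mem_filter.2 ⟨Finset.mem_univ _, hp (Finset.mem_Ici.1 hk) hi⟩
    have := Finset.card_le_card hsub
    rw [Fin.card_Ici] at this
    omega

theorem _root_.PMF.toOuterMeasure_apply_le_one {α : Type*} (p : PMF α) (s : Set α) :
    p.toOuterMeasure s ≤ 1 :=
  (p.toOuterMeasure.mono (Set.subset_univ s)).trans_eq
    ((p.toOuterMeasure_apply_eq_one_iff _).2 (Set.subset_univ _))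

theorem _root_.PMF.mul_toOuterMeasure_le_toOuterMeasure_bind {α β : Type*} (q : PMF α)
    (k : α → PMF β) {A : Set α} {G : Set β} {c : ℝ≥0∞}
    (h : ∀ a ∈ A, c ≤ (k a).toOuterMeasure G) :
    c * q.toOuterMeasure A ≤ (q.bind k).toOuterMeasure G := by
  rw [PMF.toOuterMeasure_bind_apply, PMF.toOuterMeasure_apply, ← ENNReal.tsum_mul_left]
  refine ENNReal.tsum_le_tsum fun a => ?_
  by_cases ha : a ∈ A
  · rw [Set.indicator_of_mem ha, mul_comm]
    exact mul_le_mul_right (h a ha) _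
  · rw [Set.indicator_of_notMem ha, mul_zero]
    exact zero_le

section FitnessLevels

variable {S : Type*} {st : S → PMF S} {goal inv : S → Prop} {rank : S → ℕ} {s : ℝ≥0∞}

theorem stateDist_support_invariant (init : PMF S) (h_init : ∀ x ∈ init.support, inv x)
    (h_inv : ∀ x, inv x → ∀ y ∈ (st x).support, inv y) (t : ℕ) :
    ∀ x ∈ (stateDist init st t).support, inv x := by
  induction t with
  | zero => exact h_init
  | succ t ih =>
    intro y hy
    obtain ⟨x, hx, hy⟩ := (PMF.mem_support_bind_iff _ _ _).1 hy
    exact h_inv x (ih x hx) y hy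

variable (h_inv : ∀ x, inv x → ∀ y ∈ (st x).support, inv y)
  (h_mono : ∀ x, inv x → ∀ y ∈ (st x).support, rank x ≤ rank y)
  (h_up : ∀ x, inv x → ¬ goal x → s ≤ (st x).toOuterMeasure {y | rank x < rank y})
include h_inv h_mono h_up

theorem toOuterMeasure_above_add_level_le_bind (μ : PMF S) (k : ℕ) :
    μ.toOuterMeasure {x | inv x ∧ k < rank x} +
        s * μ.toOuterMeasure {x | inv x ∧ rank x = k ∧ ¬ goal x} ≤
      (μ.bind st).toOuterMeasure {x | inv x ∧ k < rank x} := by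
  rw [PMF.toOuterMeasure_bind_apply, PMF.toOuterMeasure_apply, PMF.toOuterMeasure_apply,
    ← ENNReal.tsum_mul_left, ← ENNReal.tsum_add]
  refine ENNReal.tsum_le_tsum fun x => ?_
  by_cases hA : x ∈ {x | inv x ∧ k < rank x}
  · have hstay : (st x).toOuterMeasure {y | inv y ∧ k < rank y} = 1 :=
      (PMF.toOuterMeasure_apply_eq_one_iff _ _).2 fun y hy =>
        ⟨h_inv x hA.1 y hy, hA.2.trans_le (h_mono x hA.1 y hy)⟩
    have hB : x ∉ {x | inv x ∧ rank x = k ∧ ¬ goal x} := fun hB => hA.2.ne' hB.2.1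
    rw [Set.indicator_of_mem hA, Set.indicator_of_notMem hB, mul_zero, add_zero, hstay, mul_one]
  by_cases hB : x ∈ {x | inv x ∧ rank x = k ∧ ¬ goal x}
  · have hleave : s ≤ (st x).toOuterMeasure {y | inv y ∧ k < rank y} := by
      refine (h_up x hB.1 hB.2.2).trans (PMF.toOuterMeasure_mono _ ?_)
      rintro y ⟨hlt, hy⟩
      exact ⟨h_inv x hB.1 y hy, hB.2.1 ▸ hlt⟩
    rw [Set.indicator_of_notMem hA, Set.indicator_of_mem hB, zero_add, mul_comm]
    gcongr
  · rw [Set.indicator_of_notMem hA, Set.indicator_of_notMem hB, mul_zero, add_zero]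
    exact zero_le

/-- Each step moves a fraction `s` of the mass at level `k` above `k`, where it stays; as that
mass is at most `1`, the total time spent at level `k` is at most `s⁻¹`. -/
theorem tsum_toOuterMeasure_level_le (init : PMF S) (k : ℕ) :
    ∑' t, (stateDist init st t).toOuterMeasure {x | inv x ∧ rank x = k ∧ ¬ goal x} ≤ s⁻¹ := by
  set μ := stateDist init st
  have hpartial : ∀ T, s * ∑ t ∈ Finset.range T, (μ t).toOuterMeasure
      {x | inv x ∧ rank x = k ∧ ¬ goal x} ≤ (μ T).toOuterMeasure {x | inv x ∧ k < rank x} := by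
    intro T
    induction T with
    | zero => simp
    | succ T ih =>
      rw [Finset.sum_range_succ, mul_add]
      exact (add_le_add_left ih _).trans
        (toOuterMeasure_above_add_level_le_bind h_inv h_mono h_up (μ T) k)
  refine Summable.tsum_le_of_sum_range_le ENNReal.summable fun T => ?_
  rw [ENNReal.le_inv_iff_mul_le, mul_comm]
  exact (hpartial T).trans (PMF.toOuterMeasure_apply_le_one _ _)

theorem expectedRuntime_le_of_fitnessLevels (init : PMF S) (M : ℕ)
    (h_init : ∀ x ∈ init.support, inv x) (h_lt : ∀ x, inv x → ¬ goal x → rank x < M) :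
    expectedRuntime init st goal ≤ M * s⁻¹ := by
  have hcover : ∀ t, (stateDist init st t).toOuterMeasure {x | ¬ goal x} ≤
      ∑ k ∈ Finset.range M,
        (stateDist init st t).toOuterMeasure {x | inv x ∧ rank x = k ∧ ¬ goal x} := by
    intro t
    refine le_trans (PMF.toOuterMeasure_mono _ ?_) (MeasureTheory.measure_biUnion_finset_le _ _)
    rintro x ⟨hgoal, hx⟩
    have hinv := stateDist_support_invariant init h_init h_inv t x hx
    exact Set.mem_biUnion (Finset.mem_range.2 (h_lt x hinv hgoal)) ⟨hinv, rfl, hgoal⟩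
  calc expectedRuntime init st goal
      ≤ ∑' t, ∑ k ∈ Finset.range M,
          (stateDist init st t).toOuterMeasure {x | inv x ∧ rank x = k ∧ ¬ goal x} :=
        ENNReal.tsum_le_tsum hcover
    _ = ∑ k ∈ Finset.range M, ∑' t,
          (stateDist init st t).toOuterMeasure {x | inv x ∧ rank x = k ∧ ¬ goal x} :=
        Summable.tsum_finsetSum fun _ _ => ENNReal.summable
    _ ≤ ∑ _k ∈ Finset.range M, s⁻¹ :=
        Finset.sum_le_sum fun k _ => tsum_toOuterMeasure_level_le h_inv h_mono h_up init k
    _ = M * s⁻¹ := by rw [Finset.sum_const, Finset.card_range, nsmul_eq_mul]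

end FitnessLevels

section LOTZ

variable {n : ℕ}

theorem lt_leadingOnes_iff (x : BitString n) (i : Fin n) :
    i.val < leadingOnes x ↔ ∀ j, j ≤ i → x j = true := by
  unfold leadingOnes
  convert Fin.lt_card_filter_iff_of_antitone (p := fun k => ∀ j, j ≤ k → x j = true)
    (fun _ _ hab h j hj => h j (hj.trans hab)) i

theorem sub_trailingZeros_le_iff (x : BitString n) (i : Fin n) :
    n - trailingZeros x ≤ i.val ↔ ∀ j, i ≤ j → x j = false := by
  unfold trailingZeros
  convert Fin.sub_card_filter_le_iff_of_monotone (p := fun k => ∀ j, k ≤ j → x j = false)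
    (fun _ _ hab h j hj => h j (hab.trans hj)) i

theorem leadingOnes_le (x : BitString n) : leadingOnes x ≤ n :=
  (Finset.card_filter_le _ _).trans_eq (Finset.card_fin n)

theorem trailingZeros_le (x : BitString n) : trailingZeros x ≤ n :=
  (Finset.card_filter_le _ _).trans_eq (Finset.card_fin n)

/-- Otherwise position `LO - 1` would be both a leading one and a trailing zero. -/
theorem Ldom_le (x : BitString n) : Ldom x ≤ n := by
  by_contra! h
  have hpos : 0 < leadingOnes x := by
    have := trailingZeros_le x
    unfold Ldom at h
    omega
  have hlt : leadingOnes x - 1 < n := by have := leadingOnes_le x; omega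
  have h1 := (lt_leadingOnes_iff x ⟨_, hlt⟩).1 (by simp only; omega) _ le_rfl
  have h0 := (sub_trailingZeros_le_iff x ⟨_, hlt⟩).1 (by simp only [Ldom] at h ⊢; omega) _ le_rfl
  simp [h1] at h0

/-- Flipping the first zero raises `LO` without destroying any trailing zero. -/
theorem exists_flipBit_leadingOnes_lt (x : BitString n) (h : Ldom x < n) :
    ∃ i, leadingOnes x < leadingOnes (flipBit x i) ∧
      trailingZeros x ≤ trailingZeros (flipBit x i) := by
  have hlo : leadingOnes x < n := by unfold Ldom at h; omega
  set i : Fin n := ⟨leadingOnes x, hlo⟩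
  have hxi : x i = false := by
    by_contra! hxi
    refine (lt_irrefl i.val) ((lt_leadingOnes_iff x i).2 fun j hj => ?_)
    rcases hj.lt_or_eq with hj | rfl
    · exact (lt_leadingOnes_iff x j).1 hj j le_rfl
    · simpa using hxi
  refine ⟨i, (lt_leadingOnes_iff _ i).2 fun j hj => ?_, ?_⟩
  · rcases hj.lt_or_eq with hj | rfl
    · rw [flipBit, Function.update_of_ne hj.ne]
      exact (lt_leadingOnes_iff x j).1 hj j le_rfl
    · simp [flipBit, hxi]
  rcases Nat.eq_zero_or_pos (trailingZeros x) with h0 | h0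
  · omega
  set i₀ : Fin n := ⟨n - trailingZeros x, by omega⟩
  have hzeros := (sub_trailingZeros_le_iff x i₀).1 le_rfl
  have hflip : n - trailingZeros (flipBit x i) ≤ n - trailingZeros x :=
    (sub_trailingZeros_le_iff _ i₀).2 fun j hj => by
      have hji : j ≠ i := by
        rintro rfl
        have : n - trailingZeros x ≤ leadingOnes x := hj
        unfold Ldom at h
        omega
      rw [flipBit, Function.update_of_ne hji]
      exact hzeros j hj
  have := trailingZeros_le x
  have := trailingZeros_le (flipBit x i)
  omega

variable {x y : BitString n}

theorem LOTZ_eq_iff :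
    LOTZ x = LOTZ y ↔ leadingOnes x = leadingOnes y ∧ trailingZeros x = trailingZeros y := by
  simp [LOTZ]

theorem weaklyDominates_LOTZ_iff :
    weaklyDominates LOTZ y x ↔
      leadingOnes x ≤ leadingOnes y ∧ trailingZeros x ≤ trailingZeros y := by
  simp [weaklyDominates, LOTZ]

theorem Ldom_le_of_weaklyDominates (h : weaklyDominates LOTZ y x) : Ldom x ≤ Ldom y := by
  rw [weaklyDominates_LOTZ_iff] at h
  exact add_le_add h.1 h.2

theorem LOTZ_eq_of_weaklyDominates (hx : Ldom x = n) (h : weaklyDominates LOTZ y x) :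
    LOTZ y = LOTZ x := by
  rw [weaklyDominates_LOTZ_iff] at h
  have := Ldom_le y
  unfold Ldom at hx this
  exact LOTZ_eq_iff.2 ⟨by omega, by omega⟩

theorem LOTZ_eq_of_leadingOnes_eq (hx : Ldom x = n) (hy : Ldom y = n)
    (h : leadingOnes x = leadingOnes y) : LOTZ x = LOTZ y := by
  unfold Ldom at hx hy
  exact LOTZ_eq_iff.2 ⟨h, by omega⟩

theorem paretoOptimal_LOTZ_iff : paretoOptimal LOTZ x ↔ Ldom x = n := by
  constructor
  · intro hx
    by_contra hne
    obtain ⟨i, hlo, htz⟩ := exists_flipBit_leadingOnes_lt x (lt_of_le_of_ne (Ldom_le x) hne)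
    have hweak : weaklyDominates LOTZ (flipBit x i) x :=
      weaklyDominates_LOTZ_iff.2 ⟨hlo.le, htz⟩
    exact hx ⟨flipBit x i, hweak.1, hweak.2, fun h => hlo.ne (LOTZ_eq_iff.1 h).1⟩
  · rintro hx ⟨y, hy₁, hy₂, hne⟩
    exact hne (LOTZ_eq_of_weaklyDominates hx ⟨hy₁, hy₂⟩).symm

end LOTZ

section Population

variable {n : ℕ} {f : BitString n → ℤ × ℤ} {P : Finset (BitString n)} {s' : BitString n}

theorem mem_updatePop_self (h : ¬ ∃ z ∈ P, dominates f z s') : s' ∈ updatePop f P s' := by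
  rw [updatePop, if_neg h]
  exact Finset.mem_insert_self _ _

theorem exists_mem_updatePop_weaklyDominates {z : BitString n} (hz : z ∈ P) :
    ∃ w ∈ updatePop f P s', weaklyDominates f w z := by
  unfold updatePop
  split_ifs
  · exact ⟨z, hz, le_rfl, le_rfl⟩
  by_cases hw : weaklyDominates f s' z
  · exact ⟨s', Finset.mem_insert_self _ _, hw⟩
  · exact ⟨z, Finset.mem_insert_of_mem (Finset.mem_filter.2 ⟨hz, hw⟩), le_rfl, le_rfl⟩

theorem mutuallyNonDominated_updatePop (h : mutuallyNonDominated f P) :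
    mutuallyNonDominated f (updatePop f P s') := by
  unfold updatePop
  split_ifs with hd
  · exact h
  intro a ha b hb hdom
  simp only [Finset.mem_insert, Finset.mem_filter] at ha hb
  rcases ha with rfl | ⟨ha, hna⟩ <;> rcases hb with rfl | ⟨hb, -⟩
  · exact hdom.2.2 rfl
  · exact hd ⟨b, hb, hdom⟩
  · exact hna ⟨hdom.1, hdom.2.1⟩
  · exact h a ha b hb hdom

theorem updatePop_nonempty (h : P.Nonempty) : (updatePop f P s').Nonempty := by
  obtain ⟨z, hz⟩ := h
  obtain ⟨w, hw, -⟩ := exists_mem_updatePop_weaklyDominates (s' := s') hz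
  exact ⟨w, hw⟩

theorem mutuallyNonDominated_singleton (x : BitString n) : mutuallyNonDominated f {x} := by
  intro a ha b hb hdom
  rw [Finset.mem_singleton] at ha hb
  subst ha hb
  exact hdom.2.2 rfl

theorem maxLSub_nonempty (h : P.Nonempty) : (maxLSub P).Nonempty := by
  obtain ⟨x, hx, hmax⟩ := P.exists_max_image Ldom h
  exact ⟨x, Finset.mem_filter.2 ⟨hx, hmax⟩⟩

end Population

section Potential

variable {n : ℕ} {P : Finset (BitString n)} {s' : BitString n}

/-- On the front `L = n` the objective vector is determined by `LO`, so this records which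
Pareto-optimal objective vectors `P` attains. -/
def frontLevels (P : Finset (BitString n)) : Finset ℕ :=
  (P.filter fun z => Ldom z = n).image leadingOnes

def potential (P : Finset (BitString n)) : ℕ :=
  P.sup Ldom + (frontLevels P).card

theorem mem_frontLevels {k : ℕ} :
    k ∈ frontLevels P ↔ ∃ z ∈ P, Ldom z = n ∧ leadingOnes z = k := by
  simp [frontLevels, and_assoc]

theorem coversFront_of_card_frontLevels (h : n + 1 ≤ (frontLevels P).card) :
    coversFront LOTZ P := by
  have hsub : frontLevels P ⊆ Finset.range (n + 1) := fun k hk => by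
    obtain ⟨z, -, -, rfl⟩ := mem_frontLevels.1 hk
    exact Finset.mem_range.2 (Nat.lt_succ_of_le (leadingOnes_le z))
  have heq := Finset.eq_of_subset_of_card_le hsub (by rwa [Finset.card_range])
  intro x hx
  rw [paretoOptimal_LOTZ_iff] at hx
  have hmem : leadingOnes x ∈ frontLevels P := by
    rw [heq, Finset.mem_range]
    exact Nat.lt_succ_of_le (leadingOnes_le x)
  obtain ⟨z, hz, hzn, hzx⟩ := mem_frontLevels.1 hmem
  exact ⟨z, hz, LOTZ_eq_of_leadingOnes_eq hzn hx hzx⟩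

theorem potential_lt_of_not_coversFront (h : ¬ coversFront LOTZ P) :
    potential P < 2 * n + 1 := by
  have hsup : P.sup Ldom ≤ n := Finset.sup_le fun z _ => Ldom_le z
  have hcard : (frontLevels P).card < n + 1 :=
    lt_of_not_ge fun hle => h (coversFront_of_card_frontLevels hle)
  unfold potential
  omega

theorem frontLevels_subset_updatePop : frontLevels P ⊆ frontLevels (updatePop LOTZ P s') := by
  intro k hk
  obtain ⟨z, hz, hzn, rfl⟩ := mem_frontLevels.1 hk
  obtain ⟨w, hw, hwz⟩ := exists_mem_updatePop_weaklyDominates (s' := s') hz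
  obtain ⟨hlo, htz⟩ := LOTZ_eq_iff.1 (LOTZ_eq_of_weaklyDominates hzn hwz)
  exact mem_frontLevels.2 ⟨w, hw, by rw [Ldom, hlo, htz]; exact hzn, hlo⟩

theorem sup_Ldom_le_updatePop : P.sup Ldom ≤ (updatePop LOTZ P s').sup Ldom :=
  Finset.sup_le fun z hz => by
    obtain ⟨w, hw, hwz⟩ := exists_mem_updatePop_weaklyDominates (s' := s') hz
    exact (Ldom_le_of_weaklyDominates hwz).trans (Finset.le_sup hw)

theorem potential_le_updatePop : potential P ≤ potential (updatePop LOTZ P s') :=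
  add_le_add sup_Ldom_le_updatePop (Finset.card_le_card frontLevels_subset_updatePop)

/-- Before the front is reached: a flip raising `L` of a parent of maximal `L` cannot be
dominated, so it raises `max L`. -/
theorem exists_potential_lt_of_mem_maxLSub {x : BitString n} (hx : x ∈ maxLSub P)
    (hxn : Ldom x < n) : ∃ i, potential P < potential (updatePop LOTZ P (flipBit x i)) := by
  obtain ⟨hxP, hmax⟩ := Finset.mem_filter.1 hx
  obtain ⟨i, hlo, htz⟩ := exists_flipBit_leadingOnes_lt x hxn
  have hLx : Ldom x < Ldom (flipBit x i) := add_lt_add_of_lt_of_le hlo htz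
  have hnew : flipBit x i ∈ updatePop LOTZ P (flipBit x i) :=
    mem_updatePop_self fun ⟨z, hz, hdom⟩ =>
      (Ldom_le_of_weaklyDominates ⟨hdom.1, hdom.2.1⟩).not_gt ((hmax z hz).trans_lt hLx)
  have hsup : P.sup Ldom < (updatePop LOTZ P (flipBit x i)).sup Ldom :=
    (Finset.sup_le hmax).trans_lt (hLx.trans_le (Finset.le_sup hnew))
  exact ⟨i, add_lt_add_of_lt_of_le hsup (Finset.card_le_card frontLevels_subset_updatePop)⟩

theorem exists_potential_lt_of_isGood {x : BitString n} (hx : isGood LOTZ P x) :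
    ∃ i, potential P < potential (updatePop LOTZ P (flipBit x i)) := by
  obtain ⟨-, y, ⟨i, rfl⟩, hy, hfresh⟩ := hx
  have hyn := paretoOptimal_LOTZ_iff.1 hy
  have hnew : flipBit x i ∈ updatePop LOTZ P (flipBit x i) :=
    mem_updatePop_self fun ⟨z, _, hdom⟩ => hy ⟨z, hdom⟩
  have hssub : frontLevels P ⊂ frontLevels (updatePop LOTZ P (flipBit x i)) := by
    refine Finset.ssubset_iff_subset_ne.2 ⟨frontLevels_subset_updatePop, fun heq => ?_⟩
    have hmem : leadingOnes (flipBit x i) ∈ frontLevels P :=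
      heq ▸ mem_frontLevels.2 ⟨_, hnew, hyn, rfl⟩
    obtain ⟨z, hz, hzn, hzy⟩ := mem_frontLevels.1 hmem
    exact hfresh z hz (LOTZ_eq_of_leadingOnes_eq hzn hyn hzy)
  exact ⟨i, add_lt_add_of_le_of_lt sup_Ldom_le_updatePop (Finset.card_lt_card hssub)⟩

end Potential

theorem _root_.Real.inv_three_le_one_sub_inv_pow {n : ℕ} (hn : 0 < n) :
    (3 : ℝ)⁻¹ ≤ (1 - (n : ℝ)⁻¹) ^ (n - 1) := by
  obtain ⟨m, rfl⟩ : ∃ m, n = m + 1 := ⟨n - 1, by omega⟩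
  rcases Nat.eq_zero_or_pos m with rfl | hm
  · norm_num
  have hbase : 1 - ((m + 1 : ℕ) : ℝ)⁻¹ = (1 + (m : ℝ)⁻¹)⁻¹ := by
    have : (m : ℝ) ≠ 0 := by positivity
    push_cast
    field_simp
    ring
  rw [Nat.add_sub_cancel, hbase, inv_pow]
  gcongr
  exact Real.one_add_inv_pow_le_exp.trans Real.exp_one_lt_three.le

section Mutation

variable {n : ℕ}

theorem bitFlipCoin_apply (b : Bool) :
    bitFlipCoin n b = cond b (min (n : ℝ≥0∞)⁻¹ 1) (1 - min (n : ℝ≥0∞)⁻¹ 1) := by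
  have hq : min (n : ℝ≥0∞)⁻¹ 1 ≠ ⊤ := ne_top_of_le_ne_top ENNReal.one_ne_top (min_le_right _ _)
  cases b <;> simp [bitFlipCoin, PMF.bernoulli_apply, ENNReal.coe_sub, ENNReal.coe_toNNReal hq]

theorem globalMutationAux_cons_apply (i : Fin n) (l : List (Fin n)) (x y : BitString n) :
    globalMutationAux (i :: l) x y =
      (1 - min (n : ℝ≥0∞)⁻¹ 1) * globalMutationAux l x y +
        min (n : ℝ≥0∞)⁻¹ 1 * globalMutationAux l (flipBit x i) y := by
  simp [globalMutationAux, PMF.bind_apply, bitFlipCoin_apply, add_comm]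

theorem pow_le_globalMutationAux_self (l : List (Fin n)) (x : BitString n) :
    (1 - min (n : ℝ≥0∞)⁻¹ 1) ^ l.length ≤ globalMutationAux l x x := by
  induction l generalizing x with
  | nil => simp [globalMutationAux]
  | cons i l ih =>
    rw [globalMutationAux_cons_apply, List.length_cons, pow_succ']
    exact le_add_right (by gcongr; exact ih x)

theorem le_globalMutationAux_flipBit {l : List (Fin n)} {i : Fin n} (hi : i ∈ l)
    (x : BitString n) :
    min (n : ℝ≥0∞)⁻¹ 1 * (1 - min (n : ℝ≥0∞)⁻¹ 1) ^ (l.length - 1) ≤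
      globalMutationAux l x (flipBit x i) := by
  induction l generalizing x with
  | nil => simp at hi
  | cons j l ih =>
    rw [globalMutationAux_cons_apply, List.length_cons, Nat.add_sub_cancel]
    rcases List.mem_cons.1 hi with rfl | hi
    · exact le_add_left (by gcongr; exact pow_le_globalMutationAux_self l _)
    · obtain ⟨k, hk⟩ := Nat.exists_eq_add_of_lt (List.length_pos_of_mem hi)
      refine le_add_right ?_
      calc min (n : ℝ≥0∞)⁻¹ 1 * (1 - min (n : ℝ≥0∞)⁻¹ 1) ^ l.length
          = (1 - min (n : ℝ≥0∞)⁻¹ 1) *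
              (min (n : ℝ≥0∞)⁻¹ 1 * (1 - min (n : ℝ≥0∞)⁻¹ 1) ^ (l.length - 1)) := by
            rw [hk, Nat.add_sub_cancel, pow_succ']
            ring
        _ ≤ _ := by gcongr; exact ih hi x

theorem inv_three_mul_le_globalMutation_flipBit (hn : 0 < n) (x : BitString n) (i : Fin n) :
    (3 * n : ℝ≥0∞)⁻¹ ≤ globalMutation x (flipBit x i) := by
  have hq : min (n : ℝ≥0∞)⁻¹ 1 = (n : ℝ≥0∞)⁻¹ :=
    min_eq_left (ENNReal.inv_le_one.2 (by exact_mod_cast hn))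
  have hpow : (3 : ℝ≥0∞)⁻¹ ≤ (1 - (n : ℝ≥0∞)⁻¹) ^ (n - 1) := by
    have hinv : (n : ℝ)⁻¹ ≤ 1 := inv_le_one_of_one_le₀ (by exact_mod_cast hn)
    have h1 : (1 : ℝ≥0∞) - (n : ℝ≥0∞)⁻¹ = ENNReal.ofReal (1 - (n : ℝ)⁻¹) := by
      rw [ENNReal.ofReal_sub _ (by positivity), ENNReal.ofReal_one,
        ENNReal.ofReal_inv_of_pos (by exact_mod_cast hn), ENNReal.ofReal_natCast]
    rw [h1, ← ENNReal.ofReal_pow (by linarith), ← ENNReal.ofReal_ofNat 3,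
      ← ENNReal.ofReal_inv_of_pos (by norm_num)]
    exact ENNReal.ofReal_le_ofReal (Real.inv_three_le_one_sub_inv_pow hn)
  have hflip := le_globalMutationAux_flipBit (List.mem_finRange i) x
  rw [hq, List.length_finRange] at hflip
  rw [ENNReal.mul_inv (by simp) (by simp), mul_comm]
  exact (mul_le_mul_right hpow _).trans hflip

end Mutation

section ModifiedGSEMO

variable {n : ℕ} {f : BitString n → ℤ × ℤ} {select : Finset (BitString n) → PMF (BitString n)}
  {P : Finset (BitString n)}

theorem exists_eq_updatePop_of_mem_support_stepMod {mutate : BitString n → PMF (BitString n)}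
    {Q : Finset (BitString n)} (hQ : Q ∈ (stepMod f select mutate P).support) :
    ∃ s', Q = updatePop f P s' := by
  simp only [stepMod, PMF.mem_support_bind_iff, PMF.mem_support_map_iff] at hQ
  obtain ⟨-, -, s', -, rfl⟩ := hQ
  exact ⟨s', rfl⟩

theorem invariant_of_mem_support_stepMod {mutate : BitString n → PMF (BitString n)}
    {Q : Finset (BitString n)} (hP : P.Nonempty ∧ mutuallyNonDominated f P)
    (hQ : Q ∈ (stepMod f select mutate P).support) :
    Q.Nonempty ∧ mutuallyNonDominated f Q := by
  obtain ⟨s', rfl⟩ := exists_eq_updatePop_of_mem_support_stepMod hQ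
  exact ⟨updatePop_nonempty hP.1, mutuallyNonDominated_updatePop hP.2⟩

theorem potential_le_of_mem_support_stepMod {mutate : BitString n → PMF (BitString n)}
    {Q : Finset (BitString n)} (hQ : Q ∈ (stepMod LOTZ select mutate P).support) :
    potential P ≤ potential Q := by
  obtain ⟨s', rfl⟩ := exists_eq_updatePop_of_mem_support_stepMod hQ
  exact potential_le_updatePop

theorem invariant_of_mem_support_initDist {Q : Finset (BitString n)}
    (hQ : Q ∈ (initDist n).support) : Q.Nonempty ∧ mutuallyNonDominated f Q := by
  obtain ⟨x, -, rfl⟩ := (PMF.mem_support_map_iff _ _ _).1 hQ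
  exact ⟨Finset.singleton_nonempty x, mutuallyNonDominated_singleton x⟩

theorem mul_toOuterMeasure_le_stepMod (hn : 0 < n) {A : Set (BitString n)}
    {G : Set (Finset (BitString n))} (hA : ∀ a ∈ A, ∃ i, updatePop f P (flipBit a i) ∈ G) :
    (3 * n : ℝ≥0∞)⁻¹ * (select (maxLSub P)).toOuterMeasure A ≤
      (stepMod f select globalMutation P).toOuterMeasure G := by
  refine PMF.mul_toOuterMeasure_le_toOuterMeasure_bind _ _ fun a ha => ?_
  obtain ⟨i, hi⟩ := hA a ha
  rw [PMF.toOuterMeasure_map_apply]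
  calc (3 * n : ℝ≥0∞)⁻¹
      ≤ globalMutation a (flipBit a i) := inv_three_mul_le_globalMutation_flipBit hn a i
    _ = (globalMutation a).toOuterMeasure {flipBit a i} :=
      (PMF.toOuterMeasure_apply_singleton _ _).symm
    _ ≤ _ := (globalMutation a).toOuterMeasure.mono (Set.singleton_subset_iff.2 hi)

theorem mul_le_stepMod_potential_lt (hn : 0 < n) {p : ℝ≥0∞} (hp1 : p ≤ 1)
    (hsupp : ∀ P : Finset (BitString n), P.Nonempty → ∀ x ∈ (select P).support, x ∈ P)
    (hgood : ∀ P : Finset (BitString n), P.Nonempty → mutuallyNonDominated LOTZ P →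
      (∃ x ∈ P, paretoOptimal LOTZ x) → ¬ coversFront LOTZ P →
      p ≤ (select (maxLSub P)).toOuterMeasure {x | isGood LOTZ P x})
    (hP : P.Nonempty) (hmnd : mutuallyNonDominated LOTZ P) (hcov : ¬ coversFront LOTZ P) :
    (3 * n : ℝ≥0∞)⁻¹ * p ≤
      (stepMod LOTZ select globalMutation P).toOuterMeasure {Q | potential P < potential Q} := by
  by_cases hfront : ∃ x ∈ P, paretoOptimal LOTZ x
  · calc (3 * n : ℝ≥0∞)⁻¹ * p
        ≤ (3 * n : ℝ≥0∞)⁻¹ * (select (maxLSub P)).toOuterMeasure {x | isGood LOTZ P x} := by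
          gcongr
          exact hgood P hP hmnd hfront hcov
      _ ≤ _ := mul_toOuterMeasure_le_stepMod hn fun a ha => exists_potential_lt_of_isGood ha
  · have hsel : (select (maxLSub P)).toOuterMeasure (maxLSub P) = 1 :=
      (PMF.toOuterMeasure_apply_eq_one_iff _ _).2 (hsupp _ (maxLSub_nonempty hP))
    calc (3 * n : ℝ≥0∞)⁻¹ * p
        ≤ (3 * n : ℝ≥0∞)⁻¹ * (select (maxLSub P)).toOuterMeasure (maxLSub P) := by
          rw [hsel]
          gcongr
      _ ≤ _ := mul_toOuterMeasure_le_stepMod hn fun a ha =>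
          exists_potential_lt_of_mem_maxLSub ha <| (Ldom_le a).lt_of_ne fun h =>
            hfront ⟨a, (Finset.mem_filter.1 ha).1, paretoOptimal_LOTZ_iff.2 h⟩

end ModifiedGSEMO

/-- The modified GSEMO on LOTZ: if in every iteration after the Pareto
front is reached in which the front is not yet fully covered a good individual is
selected with probability at least `p`, then the expected number of iterations until
the population covers the whole Pareto front is at most `O(n²/p)`. -/
theorem modified_gsemo_lotz_pgood :
    ∃ C : ℝ, 0 < C ∧ ∀ n : ℕ, 0 < n → ∀ p : ℝ≥0∞, 0 < p → p ≤ 1 →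
      ∀ select : Finset (BitString n) → PMF (BitString n),
        (∀ P : Finset (BitString n), P.Nonempty →
          ∀ x ∈ (select P).support, x ∈ P) →
        (∀ P : Finset (BitString n), P.Nonempty → mutuallyNonDominated LOTZ P →
          (∃ x ∈ P, paretoOptimal LOTZ x) → ¬ coversFront LOTZ P →
          p ≤ (select (maxLSub P)).toOuterMeasure {x | isGood LOTZ P x}) →
        expectedRuntime (initDist n) (stepMod LOTZ select globalMutation)
            (coversFront LOTZ) ≤
          ENNReal.ofReal (C * (n : ℝ) ^ 2) / p := by
  refine ⟨9, by norm_num, fun n hn p hp0 hp1 select hsupp hgood => ?_⟩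
  have hruntime := expectedRuntime_le_of_fitnessLevels
    (inv := fun P => P.Nonempty ∧ mutuallyNonDominated LOTZ P) (rank := potential)
    (fun _ hP _ => invariant_of_mem_support_stepMod hP)
    (fun _ _ _ => potential_le_of_mem_support_stepMod)
    (fun _ hP hcov => mul_le_stepMod_potential_lt hn hp1 hsupp hgood hP.1 hP.2 hcov)
    (initDist n) (2 * n + 1) (fun _ => invariant_of_mem_support_initDist)
    (fun _ _ hcov => potential_lt_of_not_coversFront hcov)
  have hs : ((3 * n : ℝ≥0∞)⁻¹ * p)⁻¹ = 3 * n * p⁻¹ := by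
    have h3n : (3 * n : ℝ≥0∞) ≠ ⊤ := ENNReal.mul_ne_top (by simp) (by simp)
    rw [ENNReal.mul_inv (Or.inl (ENNReal.inv_ne_zero.2 h3n)) (Or.inr hp0.ne'), inv_inv]
  have hconst : ((2 * n + 1 : ℕ) : ℝ≥0∞) * (3 * n) ≤ ENNReal.ofReal (9 * (n : ℝ) ^ 2) := by
    rw [show (9 * (n : ℝ) ^ 2) = ((9 * n ^ 2 : ℕ) : ℝ) by push_cast; ring, ENNReal.ofReal_natCast]
    exact_mod_cast (by nlinarith : (2 * n + 1) * (3 * n) ≤ 9 * n ^ 2)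
  calc _ ≤ ((2 * n + 1 : ℕ) : ℝ≥0∞) * ((3 * n : ℝ≥0∞)⁻¹ * p)⁻¹ := hruntime
    _ = ((2 * n + 1 : ℕ) : ℝ≥0∞) * (3 * n) / p := by rw [hs, div_eq_mul_inv]; ring
    _ ≤ _ := by gcongr

end EMO
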